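/- arXiv:1602.03301 — 2 statements merged into one kernel-verified Lean document; each statement's English description precedes it below -/
import Mathlib

section
/- Let N ≥ 1, p ≥ 2, a₃ > 0, and let A : (0,∞) → [0,∞) be locally absolutely continuous and satisfy, for almost every s > 0, A(s) ≥ a₃ s^(p-2) and A(s) + s·A'(s) ≥ a₃ s^(p-2). Define φ : ℝ^N → ℝ^N by φ(z) = A(|z|)z for z ≠ 0 and φ(0) = 0. Then there exists a constant C₁ > 0, depending only on p and a₃, such that for all ξ, ζ ∈ ℝ^N with (ξ,ζ) ≠ (0,0): (φ(ξ) − φ(ζ)) · (ξ − ζ) ≥ C₁ |ξ − ζ|^p. (Degenerate case of Lemma 4.1(i).) -/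
open MeasureTheory RealInnerProductSpace

open Classical in
/-- The operator density `φ(z) = A(|z|) z`, with `φ(0) = 0`. -/
noncomputable def phiA {N : ℕ} (A : ℝ → ℝ) (z : EuclideanSpace ℝ (Fin N)) :
    EuclideanSpace ℝ (Fin N) :=
  if z = 0 then 0 else A ‖z‖ • z

/-!
By the fundamental theorem of calculus, the a.e. bound `A(s) + s A'(s) ≥ a₃ s^(p-2)` makes
`s ↦ s A(s) - a₃ s^(p-1) / (p-1)` nondecreasing, and since `A` is continuous the a.e. bound
`A(s) ≥ a₃ s^(p-2)` holds everywhere. For `a = |ζ| ≤ b = |ξ|` the pairing splits as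
`(b A(b) - a A(a)) (b - a) + (A(b) + A(a)) (a b - ξ·ζ)`, where the first factor is at least
`a₃ b^(p-2) (b - a) / (p-1)` and the second at least `a₃ b^(p-2)`. Since
`|ξ - ζ|² = (b - a)² + 2 (a b - ξ·ζ)` and `|ξ - ζ| ≤ 2b`, this gives
`C₁ = a₃ / ((p-1) 2^(p-1))`.
-/

open Set Filter Topology

theorem le_of_ae_le_of_continuousAt {X : Type*} [TopologicalSpace X] [MeasurableSpace X]
    {μ : Measure X} [μ.IsOpenPosMeasure] {f g : X → ℝ} {U : Set X} {x : X}
    (h : ∀ᵐ y ∂μ, y ∈ U → f y ≤ g y) (hU : U ∈ 𝓝 x) (hf : ContinuousAt f x)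
    (hg : ContinuousAt g x) : f x ≤ g x := by
  by_contra! hlt
  have hbad : {y | y ∈ U ∧ g y < f y} ∈ 𝓝 x := Filter.Eventually.and hU (hg.eventually_lt hf hlt)
  refine (Measure.measure_pos_of_mem_nhds μ hbad).ne' (measure_mono_null ?_ (ae_iff.1 h))
  exact fun y hy hle => (hle hy.1).not_gt hy.2

/-- `A` is locally absolutely continuous on `(0, ∞)` with a.e. derivative `A'`, in the form of
the fundamental theorem of calculus. -/
def IsPrimitiveOnPos (A A' : ℝ → ℝ) : Prop :=
  ∀ a b : ℝ, 0 < a → a ≤ b → IntervalIntegrable A' volume a b ∧ A b = A a + ∫ t in a..b, A' t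

namespace IsPrimitiveOnPos

variable {A A' : ℝ → ℝ} {a b : ℝ}

theorem eqOn_Ici (h : IsPrimitiveOnPos A A') (ha : 0 < a) :
    EqOn A (fun x => A a + ∫ t in a..x, A' t) (Ici a) :=
  fun x hx => (h a x ha hx).2

theorem continuousOn (h : IsPrimitiveOnPos A A') : ContinuousOn A (Ioi 0) := by
  intro x (hx : 0 < x)
  have hprim : ContinuousOn (fun y => A (x / 2) + ∫ t in x / 2..y, A' t) (Icc (x / 2) (2 * x)) := by
    refine continuousOn_const.add ?_
    rw [← uIcc_of_le (by linarith)]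
    exact ((h (x / 2) (2 * x) (by positivity) (by linarith)).1
      |>.absolutelyContinuousOnInterval_intervalIntegral left_mem_uIcc).continuousOn
  have hA : ContinuousOn A (Icc (x / 2) (2 * x)) :=
    hprim.congr fun y hy => h.eqOn_Ici (by positivity) hy.1
  exact (hA.continuousAt (Icc_mem_nhds (by linarith) (by linarith))).continuousWithinAt

theorem mul_rpow_le {c q : ℝ} (h : IsPrimitiveOnPos A A')
    (hae : ∀ᵐ s, 0 < s → c * s ^ q ≤ A s) {s : ℝ} (hs : 0 < s) : c * s ^ q ≤ A s :=
  le_of_ae_le_of_continuousAt hae (Ioi_mem_nhds hs)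
    (continuousAt_const.mul (Real.continuousAt_rpow_const _ _ (Or.inl hs.ne')))
    (h.continuousOn.continuousAt (Ioi_mem_nhds hs))

theorem mul_sub_mul_eq_integral (h : IsPrimitiveOnPos A A') (ha : 0 < a) (hab : a ≤ b) :
    b * A b - a * A a = ∫ t in a..b, A t + t * A' t := by
  set F := fun x => ∫ t in a..x, A' t
  have hA' := (h a b ha hab).1
  have hG : AbsolutelyContinuousOnInterval (fun t => t * (A a + F t)) a b :=
    (contDiffOn_id.absolutelyContinuousOnInterval).fun_mul
      ((contDiffOn_const.absolutelyContinuousOnInterval).add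
        (hA'.absolutelyContinuousOnInterval_intervalIntegral left_mem_uIcc))
  calc b * A b - a * A a = b * (A a + F b) - a * (A a + F a) := by
        simp [F, ← (h a b ha hab).2]
    _ = ∫ t in a..b, deriv (fun t => t * (A a + F t)) t := hG.integral_deriv_eq_sub.symm
    _ = ∫ t in a..b, A t + t * A' t := by
      refine intervalIntegral.integral_congr_ae ?_
      filter_upwards [hA'.ae_hasDerivAt_integral] with t hF ht
      have hFt : HasDerivAt F (A' t) t := hF (uIoc_subset_uIcc ht) a left_mem_uIcc
      have hat : t ∈ Ici a := by
        rw [uIoc_of_le hab] at ht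
        exact ht.1.le
      rw [((hasDerivAt_id' t).fun_mul (hFt.const_add (A a))).deriv, h.eqOn_Ici ha hat, one_mul]

theorem monotoneOn_mul_sub_mul_rpow {p a₃ : ℝ} (h : IsPrimitiveOnPos A A') (hp : 1 < p)
    (hae : ∀ᵐ s, 0 < s → a₃ * s ^ (p - 2) ≤ A s + s * A' s) :
    MonotoneOn (fun s => s * A s - a₃ / (p - 1) * s ^ (p - 1)) (Ioi 0) := by
  intro a (ha : 0 < a) b _ hab
  have hAcont : ContinuousOn A (uIcc a b) :=
    h.continuousOn.mono fun t ht => ha.trans_le (by rw [uIcc_of_le hab] at ht; exact ht.1)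
  have key : ∫ t in a..b, a₃ * t ^ (p - 2) ≤ ∫ t in a..b, A t + t * A' t := by
    refine intervalIntegral.integral_mono_ae_restrict hab
      ((intervalIntegral.intervalIntegrable_rpow' (by linarith)).const_mul a₃)
      (hAcont.intervalIntegrable.add ((h a b ha hab).1.continuousOn_mul continuousOn_id)) ?_
    filter_upwards [ae_restrict_mem measurableSet_Icc, ae_restrict_of_ae hae] with t ht hle
    exact hle (ha.trans_le ht.1)
  rw [← h.mul_sub_mul_eq_integral ha hab, intervalIntegral.integral_const_mul,
    integral_rpow (Or.inl (by linarith)), show p - 2 + 1 = p - 1 by ring] at key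
  have hrw : a₃ * ((b ^ (p - 1) - a ^ (p - 1)) / (p - 1)) =
      a₃ / (p - 1) * b ^ (p - 1) - a₃ / (p - 1) * a ^ (p - 1) := by ring
  simp only
  linarith

end IsPrimitiveOnPos

theorem Real.rpow_sub_one_mul_sub_le_rpow_sub_rpow {a b q : ℝ} (ha : 0 < a) (hab : a ≤ b)
    (hq : 1 ≤ q) : b ^ (q - 1) * (b - a) ≤ b ^ q - a ^ q := by
  have hpow : a ^ (q - 1) ≤ b ^ (q - 1) := Real.rpow_le_rpow ha.le hab (by linarith)
  have hsplit : ∀ s : ℝ, 0 < s → s ^ q = s ^ (q - 1) * s := fun s hs => by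
    rw [← Real.rpow_add_one hs.ne', sub_add_cancel]
  rw [hsplit a ha, hsplit b (ha.trans_le hab)]
  nlinarith [mul_le_mul_of_nonneg_left hpow ha.le]

theorem Real.rpow_div_two_rpow_sub_one {d p : ℝ} (hd : 0 ≤ d) (hp : p ≠ 0) :
    d ^ p / 2 ^ (p - 1) = (d / 2) ^ (p - 2) * (d ^ 2 / 2) := by
  have hdp : d ^ p = d ^ (p - 2) * d ^ 2 := by
    rw [← Real.rpow_two, ← Real.rpow_add' hd (by simpa using hp), sub_add_cancel]
  have htwo : (2 : ℝ) ^ (p - 1) = 2 ^ (p - 2) * 2 := by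
    rw [← Real.rpow_add_one two_ne_zero]; ring_nf
  rw [hdp, htwo, Real.div_rpow hd zero_le_two]
  field_simp

section InnerProductSpace

variable {F : Type*} [NormedAddCommGroup F] [InnerProductSpace ℝ F]

theorem inner_smul_sub_smul_sub (α β : ℝ) (x y : F) :
    ⟪α • x - β • y, x - y⟫ =
      (‖x‖ * α - ‖y‖ * β) * (‖x‖ - ‖y‖) + (α + β) * (‖x‖ * ‖y‖ - ⟪x, y⟫) := by
  rw [inner_sub_left, inner_sub_right, inner_sub_right, real_inner_smul_left, real_inner_smul_left,
    real_inner_smul_left, real_inner_smul_left, real_inner_self_eq_norm_sq,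
    real_inner_self_eq_norm_sq, real_inner_comm y x]
  ring

theorem mul_norm_rpow_le_inner_smul_self {p a₃ : ℝ} (hp : 2 ≤ p) (ha₃ : 0 ≤ a₃) {A : ℝ → ℝ}
    {x : F} (hA : a₃ * ‖x‖ ^ (p - 2) ≤ A ‖x‖) :
    a₃ / ((p - 1) * 2 ^ (p - 1)) * ‖x‖ ^ p ≤ ⟪A ‖x‖ • x, x⟫ := by
  have hC : a₃ / ((p - 1) * 2 ^ (p - 1)) ≤ a₃ := div_le_self ha₃
    (one_le_mul_of_one_le_of_one_le (by linarith) (Real.one_le_rpow one_le_two (by linarith)))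
  rw [real_inner_smul_left, real_inner_self_eq_norm_sq]
  calc a₃ / ((p - 1) * 2 ^ (p - 1)) * ‖x‖ ^ p ≤ a₃ * ‖x‖ ^ (p - 2) * ‖x‖ ^ 2 := by
        rw [mul_assoc, ← Real.rpow_two, ← Real.rpow_add' (norm_nonneg x) (by linarith),
          sub_add_cancel]
        gcongr
    _ ≤ A ‖x‖ * ‖x‖ ^ 2 := by gcongr

theorem mul_norm_rpow_le_inner_smul_sub_smul {p a₃ : ℝ} (hp : 2 ≤ p) (ha₃ : 0 ≤ a₃) {A : ℝ → ℝ}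
    (hA : ∀ s, 0 < s → a₃ * s ^ (p - 2) ≤ A s)
    (hmono : MonotoneOn (fun s => s * A s - a₃ / (p - 1) * s ^ (p - 1)) (Ioi 0))
    {x y : F} (hx : x ≠ 0) (hle : ‖y‖ ≤ ‖x‖) :
    a₃ / ((p - 1) * 2 ^ (p - 1)) * ‖x - y‖ ^ p ≤ ⟪A ‖x‖ • x - A ‖y‖ • y, x - y⟫ := by
  have hp1 : 1 ≤ p - 1 := by linarith
  have hb : 0 < ‖x‖ := norm_pos_iff.2 hx
  rcases eq_or_ne y 0 with rfl | hy
  · simpa using mul_norm_rpow_le_inner_smul_self hp ha₃ (hA ‖x‖ hb)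
  have ha : 0 < ‖y‖ := norm_pos_iff.2 hy
  have hE : 0 ≤ ‖x‖ * ‖y‖ - ⟪x, y⟫ := sub_nonneg.2 (real_inner_le_norm x y)
  have hd : ‖x - y‖ ≤ 2 * ‖x‖ := (norm_sub_le x y).trans (by linarith)
  have hdsq : ‖x - y‖ ^ 2 = (‖x‖ - ‖y‖) ^ 2 + 2 * (‖x‖ * ‖y‖ - ⟪x, y⟫) := by
    rw [norm_sub_sq_real]; ring
  rw [inner_smul_sub_smul_sub]
  set b := ‖x‖
  set a := ‖y‖
  set E := b * a - ⟪x, y⟫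
  set d := ‖x - y‖
  have hgrowth : a₃ / (p - 1) * b ^ (p - 2) * (b - a) ≤ b * A b - a * A a := by
    have hinc : _ ≤ _ := hmono ha hb hle
    have hpow := Real.rpow_sub_one_mul_sub_le_rpow_sub_rpow ha hle hp1
    rw [show p - 1 - 1 = p - 2 by ring] at hpow
    nlinarith [mul_le_mul_of_nonneg_left hpow (div_nonneg ha₃ (by linarith : (0 : ℝ) ≤ p - 1))]
  have hsum : a₃ / (p - 1) * b ^ (p - 2) ≤ A b + A a := by
    have hAa : 0 ≤ A a := (mul_nonneg ha₃ (Real.rpow_nonneg ha.le _)).trans (hA a ha)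
    have := mul_le_mul_of_nonneg_right (div_le_self ha₃ hp1) (Real.rpow_nonneg hb.le (p - 2))
    linarith [hA b hb]
  calc a₃ / ((p - 1) * 2 ^ (p - 1)) * d ^ p = a₃ / (p - 1) * (d ^ p / 2 ^ (p - 1)) := by
        rw [← div_div]; ring
    _ = a₃ / (p - 1) * (d / 2) ^ (p - 2) * (d ^ 2 / 2) := by
        rw [Real.rpow_div_two_rpow_sub_one (norm_nonneg _) (by linarith)]; ring
    _ ≤ a₃ / (p - 1) * b ^ (p - 2) * ((b - a) ^ 2 + E) := by
        gcongr
        · linarith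
        · nlinarith [sq_nonneg (b - a)]
    _ ≤ (b * A b - a * A a) * (b - a) + (A b + A a) * E := by
        nlinarith [mul_le_mul_of_nonneg_right hgrowth (sub_nonneg.2 hle),
          mul_le_mul_of_nonneg_right hsum hE]

end InnerProductSpace

theorem phiA_eq_smul {N : ℕ} (A : ℝ → ℝ) (z : EuclideanSpace ℝ (Fin N)) :
    phiA A z = A ‖z‖ • z := by
  rw [phiA]
  split_ifs with hz
  · rw [hz, smul_zero]
  · rfl

/-- Degenerate case (`p ≥ 2`) of Lemma 4.1(i): strong monotonicity of `z ↦ A(|z|)z` for a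
locally absolutely continuous `A : (0,∞) → [0,∞)` satisfying the ellipticity conditions
`A(s) ≥ a₃ s^(p-2)` and `A(s) + s A'(s) ≥ a₃ s^(p-2)` a.e. on `(0,∞)`.  Local absolute
continuity is encoded through the fundamental theorem of calculus: `A'` is locally integrable
on `(0,∞)` and `A(b) = A(a) + ∫_a^b A'` whenever `0 < a ≤ b`.  The constant `C₁` depends only
on `p` and `a₃`. -/
theorem degenerate_strong_monotonicity (p a₃ : ℝ) (hp : 2 ≤ p) (ha₃ : 0 < a₃) :
    ∃ C₁ > 0, ∀ N : ℕ, 1 ≤ N → ∀ A A' : ℝ → ℝ,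
      (∀ s : ℝ, 0 < s → 0 ≤ A s) →
      (∀ a b : ℝ, 0 < a → a ≤ b →
        IntervalIntegrable A' volume a b ∧ A b = A a + ∫ t in a..b, A' t) →
      (∀ᵐ (s : ℝ) ∂volume, 0 < s → a₃ * s ^ (p - 2) ≤ A s ∧ a₃ * s ^ (p - 2) ≤ A s + s * A' s) →
      ∀ ξ ζ : EuclideanSpace ℝ (Fin N), ¬(ξ = 0 ∧ ζ = 0) →
        C₁ * ‖ξ - ζ‖ ^ p ≤ ⟪phiA A ξ - phiA A ζ, ξ - ζ⟫ := by
  have hp1 : 0 < p - 1 := by linarith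
  refine ⟨a₃ / ((p - 1) * 2 ^ (p - 1)), by positivity, ?_⟩
  intro N _ A A' _ hA hae ξ ζ hne
  have hlower : ∀ s, 0 < s → a₃ * s ^ (p - 2) ≤ A s := fun s =>
    IsPrimitiveOnPos.mul_rpow_le hA (hae.mono fun _ h hs => (h hs).1)
  have hmono := IsPrimitiveOnPos.monotoneOn_mul_sub_mul_rpow hA (by linarith)
    (hae.mono fun _ h hs => (h hs).2)
  rw [phiA_eq_smul, phiA_eq_smul]
  wlog hle : ‖ζ‖ ≤ ‖ξ‖ generalizing ξ ζ
  · rw [← inner_neg_neg, neg_sub, neg_sub, norm_sub_rev]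
    exact this ζ ξ (by tauto) (le_of_not_ge hle)
  refine mul_norm_rpow_le_inner_smul_sub_smul hp ha₃.le hlower hmono ?_ hle
  rintro rfl
  exact hne ⟨rfl, norm_le_zero_iff.mp (hle.trans_eq norm_zero)⟩
end

section
/- Let p ≥ 2 and N ≥ 1. For all ξ, ζ ∈ ℝ^N one has ∫₀¹ |ζ + t(ξ − ζ)|^(p-2) dt ≥ (2^(2-p)/(p−1)) · |ξ − ζ|^(p-2). -/
/-!
The point of the line `t ↦ ζ + t • (ξ - ζ)` closest to the origin sits at some parameter `t₀`,
and by Cauchy–Schwarz `‖ζ + t • (ξ - ζ)‖ ≥ |t - t₀| ‖ξ - ζ‖`. This reduces the claim to the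
one-dimensional bound `∫₀¹ |t - a|^q dt ≥ 2^(-q) / (q + 1)`, where `q = p - 2`. Replacing `a` by
its nearest point `b` of `[0, 1]` only decreases the integrand, the integral then equals
`(b^(q+1) + (1 - b)^(q+1)) / (q + 1)`, and convexity of `x ↦ x^(q+1)` bounds this below by its
value at `b = 1/2`.
-/

open MeasureTheory intervalIntegral Set

lemma exists_abs_sub_mul_norm_le_norm_add_smul {E : Type*} [NormedAddCommGroup E]
    [InnerProductSpace ℝ E] (x v : E) :
    ∃ t₀ : ℝ, ∀ t : ℝ, |t - t₀| * ‖v‖ ≤ ‖x + t • v‖ := by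
  set t₀ : ℝ := -inner ℝ x v / ‖v‖ ^ 2 with ht₀
  refine ⟨t₀, fun t => ?_⟩
  rcases eq_or_ne v 0 with rfl | hv
  · simp
  have hv' : 0 < ‖v‖ := norm_pos_iff.mpr hv
  have h_inner : inner ℝ (x + t • v) v = (t - t₀) * ‖v‖ ^ 2 := by
    rw [inner_add_left, real_inner_smul_left, real_inner_self_eq_norm_sq, ht₀]
    field_simp
    ring
  have h_cs := abs_real_inner_le_norm (x + t • v) v
  rw [h_inner, abs_mul, abs_of_pos (by positivity : 0 < ‖v‖ ^ 2), pow_two, ← mul_assoc] at h_cs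
  exact le_of_mul_le_mul_right h_cs hv'

lemma two_rpow_one_sub_le_rpow_add_one_sub_rpow {r b : ℝ} (hr : 1 ≤ r) (hb₀ : 0 ≤ b)
    (hb₁ : b ≤ 1) : (2 : ℝ) ^ (1 - r) ≤ b ^ r + (1 - b) ^ r := by
  lift b to NNReal using hb₀
  have h := NNReal.rpow_add_le_mul_rpow_add_rpow b (1 - b) hr
  rw [add_tsub_cancel_of_le (by exact_mod_cast hb₁), NNReal.one_rpow] at h
  have h' : ((1 : NNReal) : ℝ) ≤ ((2 ^ (r - 1) * (b ^ r + (1 - b) ^ r) : NNReal) : ℝ) := by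
    exact_mod_cast h
  push_cast [NNReal.coe_sub (show b ≤ 1 by exact_mod_cast hb₁)] at h'
  rwa [show 1 - r = -(r - 1) by ring, Real.rpow_neg zero_le_two,
    inv_le_iff_one_le_mul₀' (by positivity)]

lemma integral_abs_rpow_of_nonneg {q c : ℝ} (hq : -1 < q) (hc : 0 ≤ c) :
    ∫ s in (0 : ℝ)..c, |s| ^ q = c ^ (q + 1) / (q + 1) := by
  rw [integral_congr (g := fun s => s ^ q) fun s hs => by
    rw [uIcc_of_le hc] at hs; simp only [abs_of_nonneg hs.1]]
  rw [integral_rpow (Or.inl hq), Real.zero_rpow (by linarith), sub_zero]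

lemma integral_abs_sub_rpow {q b : ℝ} (hq : 0 ≤ q) (hb₀ : 0 ≤ b) (hb₁ : b ≤ 1) :
    ∫ t in (0 : ℝ)..1, |t - b| ^ q = (b ^ (q + 1) + (1 - b) ^ (q + 1)) / (q + 1) := by
  have h_int : ∀ c d : ℝ, IntervalIntegrable (fun s : ℝ => |s| ^ q) volume c d := fun c d =>
    (continuous_abs.rpow_const fun _ => Or.inr hq).intervalIntegrable c d
  have h_left : ∫ s in -b..0, |s| ^ q = ∫ s in (0 : ℝ)..b, |s| ^ q := by
    simpa using (integral_comp_neg (a := 0) (b := b) fun s : ℝ => |s| ^ q).symm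
  rw [integral_comp_sub_right (fun s => |s| ^ q), zero_sub,
    ← integral_add_adjacent_intervals (h_int _ 0) (h_int 0 _), h_left,
    integral_abs_rpow_of_nonneg (by linarith) hb₀,
    integral_abs_rpow_of_nonneg (by linarith) (by linarith), add_div]

lemma abs_sub_max_min_le {t a : ℝ} (ht : t ∈ Icc (0 : ℝ) 1) :
    |t - max 0 (min a 1)| ≤ |t - a| := by
  obtain ⟨ht₀, ht₁⟩ := ht
  grind

theorem div_le_integral_abs_sub_rpow {q : ℝ} (hq : 0 ≤ q) (a : ℝ) :
    (2 : ℝ) ^ (-q) / (q + 1) ≤ ∫ t in (0 : ℝ)..1, |t - a| ^ q := by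
  set b := max 0 (min a 1)
  have hb₀ : 0 ≤ b := le_max_left 0 _
  have hb₁ : b ≤ 1 := max_le zero_le_one (min_le_right _ _)
  have h_cont : ∀ c : ℝ, Continuous fun t : ℝ => |t - c| ^ q := fun c => by
    fun_prop (disch := exact fun _ => Or.inr hq)
  calc (2 : ℝ) ^ (-q) / (q + 1) ≤ (b ^ (q + 1) + (1 - b) ^ (q + 1)) / (q + 1) := by
        gcongr
        simpa using two_rpow_one_sub_le_rpow_add_one_sub_rpow (r := q + 1) (by linarith) hb₀ hb₁
    _ = ∫ t in (0 : ℝ)..1, |t - b| ^ q := (integral_abs_sub_rpow hq hb₀ hb₁).symm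
    _ ≤ ∫ t in (0 : ℝ)..1, |t - a| ^ q :=
        integral_mono_on zero_le_one ((h_cont b).intervalIntegrable 0 1)
          ((h_cont a).intervalIntegrable 0 1) fun t ht =>
          Real.rpow_le_rpow (abs_nonneg _) (abs_sub_max_min_le ht) hq

theorem segment_integral_lower_bound_general (N : ℕ) (p : ℝ) (hp : 2 ≤ p)
    (ξ ζ : EuclideanSpace ℝ (Fin N)) :
    (2 : ℝ) ^ (2 - p) / (p - 1) * ‖ξ - ζ‖ ^ (p - 2) ≤
      ∫ t in (0:ℝ)..1, ‖ζ + t • (ξ - ζ)‖ ^ (p - 2) := by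
  obtain ⟨t₀, ht₀⟩ := exists_abs_sub_mul_norm_le_norm_add_smul ζ (ξ - ζ)
  have hq : 0 ≤ p - 2 := by linarith
  calc (2 : ℝ) ^ (2 - p) / (p - 1) * ‖ξ - ζ‖ ^ (p - 2)
      = (2 : ℝ) ^ (-(p - 2)) / (p - 2 + 1) * ‖ξ - ζ‖ ^ (p - 2) := by ring_nf
    _ ≤ (∫ t in (0 : ℝ)..1, |t - t₀| ^ (p - 2)) * ‖ξ - ζ‖ ^ (p - 2) := by
        gcongr
        exact div_le_integral_abs_sub_rpow hq t₀
    _ = ∫ t in (0 : ℝ)..1, (|t - t₀| * ‖ξ - ζ‖) ^ (p - 2) := by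
        rw [← intervalIntegral.integral_mul_const]
        simp only [Real.mul_rpow (abs_nonneg _) (norm_nonneg _)]
    _ ≤ ∫ t in (0 : ℝ)..1, ‖ζ + t • (ξ - ζ)‖ ^ (p - 2) :=
        integral_mono_on zero_le_one
          (Continuous.intervalIntegrable (by fun_prop (disch := exact fun _ => Or.inr hq)) 0 1)
          (Continuous.intervalIntegrable (by fun_prop (disch := exact fun _ => Or.inr hq)) 0 1)
          fun t _ => Real.rpow_le_rpow (by positivity) (ht₀ t) hq

/-- Lower bound for the segment integral: for `p ≥ 2` and all `ξ, ζ ∈ ℝ^N`,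
`∫₀¹ |ζ + t(ξ − ζ)|^(p-2) dt ≥ (2^(2-p)/(p-1)) |ξ − ζ|^(p-2)`. -/
theorem segment_integral_lower_bound (N : ℕ) (hN : 1 ≤ N) (p : ℝ) (hp : 2 ≤ p)
    (ξ ζ : EuclideanSpace ℝ (Fin N)) :
    (2 : ℝ) ^ (2 - p) / (p - 1) * ‖ξ - ζ‖ ^ (p - 2) ≤
      ∫ t in (0:ℝ)..1, ‖ζ + t • (ξ - ζ)‖ ^ (p - 2) :=
  segment_integral_lower_bound_general N p hp ξ ζ
end
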